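/- For the configuration t = (0_{m_1}, 1, 0_{m_2}, 1, ..., 1, 0_{m_{2n}}, 1) ∈ {0,1}^k with 2n ones, the discrete Fourier transform j_k(t) := 2^{-k} Σ_σ T_k(σ) (-1)^{σ·t} of T_k = Trace ∘ M_k equals (-1)^n · 2^{-k} · (3^{Δm_1} + 3^{Δm_2}), where Δm_1 = m_1 + m_3 + ... + m_{2n-1} and Δm_2 = m_2 + m_4 + ... + m_{2n}. -/
import Mathlib

open Matrix

namespace Farey

def A : Matrix (Fin 2) (Fin 2) ℤ := !![1, 0; 1, 1]
def B : Matrix (Fin 2) (Fin 2) ℤ := !![1, 1; 0, 1]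

/-- The Farey matrix product on a list `(σ_1,…,σ_k)` of spins:
`M [] = 1` and `M (σ_1,…,σ_k) = A^(1-σ_k) B^(σ_k) * M (σ_1,…,σ_{k-1})`,
i.e. `M (σ_1 :: rest) = M rest * (A or B)`. -/
def M : List Bool → Matrix (Fin 2) (Fin 2) ℤ
  | [] => 1
  | b :: rest => M rest * (if b then B else A)

/-- `T_k(σ) = Trace (M_k(σ))`. -/
def T (l : List Bool) : ℤ := (M l).trace

/-- Auxiliary: the signed sum of Farey products factorises as a product of
`S = A+B` (at `t_i = 0`) and `D = A-B` (at `t_i = 1`) factors. -/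
def P : List Bool → Matrix (Fin 2) (Fin 2) ℤ
  | [] => 1
  | b :: r => P r * (if b then A - B else A + B)

lemma P_append (l₁ l₂ : List Bool) : P (l₁ ++ l₂) = P l₂ * P l₁ := by
  induction l₁ with
  | nil => simp [P]
  | cons b r ih => simp [P, ih, mul_assoc]

lemma P_replicate (m : ℕ) : P (List.replicate m false) = (A + B) ^ m := by
  induction m with
  | zero => simp [P]
  | succ m ih =>
    rw [List.replicate_succ']; simp [P_append, P, ih, pow_succ]
    exact (pow_succ' _ _).symm.trans (pow_succ _ _)

lemma P_block (a : ℕ) :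
    P (List.replicate a false ++ [true]) = (A - B) * (A + B) ^ a := by
  rw [P_append, P_replicate]
  simp [P]

lemma sum_sign_M (t : List Bool) :
    ∑ σ : Fin t.length → Bool,
      ((-1 : ℤ) ^ (∑ i : Fin t.length, if σ i && t.get i then 1 else 0 : ℕ)) • M (List.ofFn σ)
    = P t := by
  induction t with
  | nil =>
    simp [P, M]
  | cons c r ih =>
    simp only [List.length_cons]
    rw [← Equiv.sum_comp (Fin.consEquiv fun _ : Fin (r.length+1) => Bool)]
    rw [Fintype.sum_prod_type]
    have hc : ∀ (b : Bool) (τ : Fin r.length → Bool),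
        (Fin.consEquiv fun _ : Fin (r.length+1) => Bool) (b, τ) = Fin.cons b τ := fun b τ => rfl
    simp only [hc]
    have hofn : ∀ (b : Bool) (τ : Fin r.length → Bool),
        List.ofFn (Fin.cons b τ : Fin (r.length+1) → Bool) = b :: List.ofFn τ := by
      intro b τ
      rw [List.ofFn_succ]
      simp
    have hexp : ∀ (b : Bool) (τ : Fin r.length → Bool),
        (∑ i : Fin (r.length + 1),
          if (Fin.cons b τ : Fin (r.length+1) → Bool) i && (c :: r).get i then 1 else 0 : ℕ)
        = (if b && c then 1 else 0) + ∑ i : Fin r.length, if τ i && r.get i then 1 else 0 := by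
      intro b τ
      rw [Fin.sum_univ_succ]
      simp [Fin.cons_succ]
    simp only [hofn, hexp, M, pow_add]
    have : ∀ b : Bool, ∑ τ : Fin r.length → Bool,
        ((-1:ℤ) ^ (if b && c then 1 else 0 : ℕ) * (-1:ℤ) ^ (∑ i : Fin r.length, if τ i && r.get i then 1 else 0 : ℕ)) •
          (M (List.ofFn τ) * (if b then B else A))
        = ((-1:ℤ) ^ (if b && c then 1 else 0 : ℕ)) • (P r * (if b then B else A)) := by
      intro b
      rw [← ih, Finset.sum_mul, Finset.smul_sum]
      refine Finset.sum_congr rfl fun τ _ => ?_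
      rw [mul_smul, smul_mul_assoc]
    rw [Fintype.sum_bool]
    rw [this true, this false]
    cases c <;> simp [P] <;> [rw [mul_add]; rw [mul_sub]] <;> abel

lemma S_mulVec_u : (A + B) *ᵥ ![1, 1] = (3 : ℤ) • ![1, 1] := by
  funext i; fin_cases i <;> simp [A, B, Matrix.mulVec, dotProduct, Fin.sum_univ_two]

lemma S_mulVec_v : (A + B) *ᵥ ![1, -1] = ![1, -1] := by
  funext i; fin_cases i <;> simp [A, B, Matrix.mulVec, dotProduct, Fin.sum_univ_two]

lemma D_mulVec_u : (A - B) *ᵥ ![1, 1] = (-1 : ℤ) • ![1, -1] := by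
  funext i; fin_cases i <;> simp [A, B, Matrix.mulVec, dotProduct, Fin.sum_univ_two]

lemma D_mulVec_v : (A - B) *ᵥ ![1, -1] = ![1, 1] := by
  funext i; fin_cases i <;> simp [A, B, Matrix.mulVec, dotProduct, Fin.sum_univ_two]

lemma Spow_mulVec_u (a : ℕ) : ((A + B) ^ a) *ᵥ ![1, 1] = ((3:ℤ) ^ a) • ![1, 1] := by
  induction a with
  | zero => simp
  | succ a ih =>
    rw [pow_succ', ← mulVec_mulVec, ih, mulVec_smul, S_mulVec_u, smul_smul, pow_succ', mul_comm]

lemma Spow_mulVec_v (a : ℕ) : ((A + B) ^ a) *ᵥ ![1, -1] = ![1, -1] := by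
  induction a with
  | zero => simp
  | succ a ih => rw [pow_succ', ← mulVec_mulVec, ih, S_mulVec_v]

lemma trace_of_eigen (Q : Matrix (Fin 2) (Fin 2) ℤ) (l μ : ℤ)
    (h1 : Q *ᵥ ![1, 1] = l • ![1, 1]) (h2 : Q *ᵥ ![1, -1] = μ • ![1, -1]) :
    Q.trace = l + μ := by
  have e1 := congrFun h1 0
  have e2 := congrFun h1 1
  have e3 := congrFun h2 0
  have e4 := congrFun h2 1
  simp [Matrix.mulVec, dotProduct, Fin.sum_univ_two] at e1 e2 e3 e4
  rw [Matrix.trace_fin_two]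
  omega

lemma P_flatMap_eigen (m : ℕ → ℕ) (n : ℕ) :
    P ((List.range (2 * n)).flatMap
        (fun i => List.replicate (m (i + 1)) false ++ [true])) *ᵥ ![1, 1]
      = (((-1:ℤ) ^ n * 3 ^ (∑ i ∈ Finset.range n, m (2 * i + 1)))) • ![1, 1] ∧
    P ((List.range (2 * n)).flatMap
        (fun i => List.replicate (m (i + 1)) false ++ [true])) *ᵥ ![1, -1]
      = (((-1:ℤ) ^ n * 3 ^ (∑ i ∈ Finset.range n, m (2 * i + 2)))) • ![1, -1] := by
  induction n with
  | zero => constructor <;> simp [P]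
  | succ n ih =>
    obtain ⟨ih1, ih2⟩ := ih
    have hrange : 2 * (n + 1) = (2 * n + 1) + 1 := by ring
    rw [hrange, List.range_succ, List.range_succ, List.flatMap_append, List.flatMap_append]
    simp only [List.flatMap_cons, List.flatMap_nil, List.append_nil]
    rw [P_append, P_block, P_append, P_block]
    have h2n : 2 * n + 1 + 1 = 2 * n + 2 := by ring
    rw [h2n]
    constructor
    · simp only [← mulVec_mulVec]
      rw [ih1]
      simp only [mulVec_smul, Spow_mulVec_u, D_mulVec_u, Spow_mulVec_v, D_mulVec_v, smul_smul,
        mulVec_smul]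
      congr 1
      rw [Finset.sum_range_succ, pow_succ, pow_add]
      ring
    · simp only [← mulVec_mulVec]
      rw [ih2]
      simp only [mulVec_smul, Spow_mulVec_u, D_mulVec_u, Spow_mulVec_v, D_mulVec_v, smul_smul,
        mulVec_smul]
      congr 1
      rw [Finset.sum_range_succ, pow_succ, pow_add]
      ring

lemma trace_P_flatMap (m : ℕ → ℕ) (n : ℕ) :
    (P ((List.range (2 * n)).flatMap
        (fun i => List.replicate (m (i + 1)) false ++ [true]))).trace
      = (-1:ℤ) ^ n * (3 ^ (∑ i ∈ Finset.range n, m (2 * i + 1))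
          + 3 ^ (∑ i ∈ Finset.range n, m (2 * i + 2))) := by
  obtain ⟨h1, h2⟩ := P_flatMap_eigen m n
  rw [trace_of_eigen _ _ _ h1 h2]
  ring

/-- The Fourier transform `j_k(t) = 2^{-k} Σ_{σ∈{0,1}^k} T_k(σ) (-1)^{σ⬝t}` at the
configuration `t = (0_{m_1},1,0_{m_2},1,…,1,0_{m_{2n}},1)` equals
`(-1)^n 2^{-k} (3^{Δm_1} + 3^{Δm_2})` with `Δm_1 = m_1+m_3+⋯+m_{2n-1}`,
`Δm_2 = m_2+m_4+⋯+m_{2n}`. -/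
theorem fourier_T_even (n : ℕ) (m : ℕ → ℕ)
    (t : List Bool)
    (ht : t = (List.range (2 * n)).flatMap
      (fun i => List.replicate (m (i + 1)) false ++ [true]))
    (k : ℕ) (hk : k = t.length) :
    (2 : ℝ) ^ (-(k : ℤ)) *
        ∑ σ : Fin k → Bool,
          (T (List.ofFn σ) : ℝ) *
            (-1 : ℝ) ^ (∑ i : Fin k,
              if σ i && t.get (Fin.cast hk i) then 1 else 0 : ℕ)
      = (-1 : ℝ) ^ n * (2 : ℝ) ^ (-(k : ℤ)) *
          ((3 : ℝ) ^ (∑ i ∈ Finset.range n, m (2 * i + 1)) +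
            (3 : ℝ) ^ (∑ i ∈ Finset.range n, m (2 * i + 2))) := by
  subst hk
  have hZ : (∑ σ : Fin t.length → Bool,
      ((-1 : ℤ) ^ (∑ i : Fin t.length, if σ i && t.get i then 1 else 0 : ℕ)) * T (List.ofFn σ))
      = (-1:ℤ) ^ n * (3 ^ (∑ i ∈ Finset.range n, m (2 * i + 1))
          + 3 ^ (∑ i ∈ Finset.range n, m (2 * i + 2))) := by
    have h := congrArg Matrix.trace (sum_sign_M t)
    rw [Matrix.trace_sum] at h
    simp only [Matrix.trace_smul, smul_eq_mul] at h
    rw [ht] at h ⊢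
    simp only [T]
    rw [h, trace_P_flatMap]
  simp only [Fin.cast_refl, id_eq, Function.id_def]
  have hcast : ∑ σ : Fin t.length → Bool,
      (T (List.ofFn σ) : ℝ) *
        (-1 : ℝ) ^ (∑ i : Fin t.length, if σ i && t.get i then 1 else 0 : ℕ)
      = ((∑ σ : Fin t.length → Bool,
        ((-1 : ℤ) ^ (∑ i : Fin t.length, if σ i && t.get i then 1 else 0 : ℕ)) * T (List.ofFn σ) : ℤ) : ℝ) := by
    push_cast
    exact Finset.sum_congr rfl fun σ _ => by ring
  rw [hcast, hZ]
  push_cast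
  ring

end Farey
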